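/- Let p be an odd prime, and let r, t be non-negative integers with r ≥ t and r - t even such that r_0 and t_0 have different parities and r_0 + t_0 ≤ p - 4 (where n_i denotes the i-th base-p digit of n). If (N, σ, δ, I) is an admissible quadruple for the pair (r, t) with N ≥ 1, then 0 ∉ I, σ_0 = t_0 + 1, and δ_0 = (r_0 - t_0 + p)/2. -/

import Mathlib

/-- The `i`-th digit of the base-`p` expansion of `n`. -/
def digit (p n i : ℕ) : ℕ := n / p ^ i % p

/-- `σ_I = ∑_{i ∈ I} p^i σ_i`. -/
def digitSum (p σ : ℕ) (I : Finset ℕ) : ℕ := ∑ i ∈ I, p ^ i * digit p σ i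

/-- An admissible triple `(N, σ, δ)`. -/
def AdmissibleTriple (p N σ δ : ℕ) : Prop :=
  σ < p ^ (N + 1) - p ^ N ∧ δ < p ^ (N + 1) - p ^ N ∧
  (∀ i < N, digit p σ i + digit p δ i ≤ p - 1) ∧
  digit p σ N + digit p δ N < p - 1

/-- An admissible quadruple `(N, σ, δ, I)`. -/
def AdmissibleQuadruple (p N σ δ : ℕ) (I : Finset ℕ) : Prop :=
  AdmissibleTriple p N σ δ ∧ ∀ i ∈ I, digit p σ i ≠ 0 ∧ i ≠ N

/-- An admissible quadruple for the pair `(r, t)`. -/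
def AdmissibleQuadrupleFor (p r t N σ δ : ℕ) (I : Finset ℕ) : Prop :=
  AdmissibleQuadruple p N σ δ I ∧
  t + 2 * digitSum p σ I = p ^ N - 1 + σ ∧
  r ≡ p ^ N - 1 + σ + 2 * δ [MOD 2 * p ^ (N + 1)]

/-!
Modulo `p`, and using `N ≥ 1` so that `p ^ N ≡ 0`, the two defining relations of the quadruple
become `t₀ + 2 σ₀ [0 ∈ I] + 1 ≡ σ₀` and `r₀ + 1 ≡ σ₀ + 2 δ₀`. The first pins down `σ₀` by size
alone. The second only determines `δ₀` up to a multiple of `2p` by size, but the parity hypothesis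
on `r₀, t₀` makes the relevant difference even, so it is divisible by `2p` as `p` is odd, hence
zero. When `0 ∈ I` this forces `r₀ + t₀ + 2 = p + 2 δ₀`, contradicting `r₀ + t₀ ≤ p - 4`.
-/

theorem Int.eq_zero_of_dvd_of_even_of_abs_lt_two_mul {m x : ℤ} (hm : Odd m) (hdvd : m ∣ x)
    (hx : Even x) (hlt : |x| < 2 * m) : x = 0 :=
  Int.eq_zero_of_abs_lt_dvd
    ((Int.isCoprime_two_left.mpr hm).mul_dvd (even_iff_two_dvd.mp hx) hdvd) hlt

theorem digit_lt {p : ℕ} (hp : 0 < p) (n i : ℕ) : digit p n i < p := Nat.mod_lt _ hp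

theorem natCast_digit_zero (p n : ℕ) : (digit p n 0 : ZMod p) = n := by
  simp [digit, ZMod.natCast_mod]

theorem natCast_digitSum (p σ : ℕ) (I : Finset ℕ) :
    (digitSum p σ I : ZMod p) = if 0 ∈ I then (σ : ZMod p) else 0 := by
  rw [digitSum, Nat.cast_sum, ← Finset.sum_ite_eq' I 0 fun _ => (σ : ZMod p)]
  refine Finset.sum_congr rfl fun i _ => ?_
  split_ifs with hi
  · simp [hi, natCast_digit_zero]
  · simp [zero_pow hi]

namespace AdmissibleQuadrupleFor

variable {p r t N σ δ : ℕ} {I : Finset ℕ}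

theorem digit_zero_add_digit_zero_le (h : AdmissibleQuadrupleFor p r t N σ δ I) (hN : N ≠ 0) :
    digit p σ 0 + digit p δ 0 ≤ p - 1 :=
  h.1.1.2.2.1 0 (Nat.pos_of_ne_zero hN)

theorem natCast_digit_t (h : AdmissibleQuadrupleFor p r t N σ δ I) (hp : 0 < p) (hN : N ≠ 0) :
    (digit p t 0 : ZMod p) + 2 * (if 0 ∈ I then (digit p σ 0 : ZMod p) else 0) + 1 =
      digit p σ 0 := by
  have hpow : 0 < p ^ N := pow_pos hp N
  have key : t + 2 * digitSum p σ I + 1 = p ^ N + σ := by have := h.2.1; omega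
  have := congrArg (Nat.cast : ℕ → ZMod p) key
  push_cast [natCast_digitSum, ZMod.natCast_self, zero_pow hN] at this
  simpa [natCast_digit_zero] using this

theorem natCast_digit_r (h : AdmissibleQuadrupleFor p r t N σ δ I) (hp : 0 < p) (hN : N ≠ 0) :
    (digit p r 0 : ZMod p) + 1 = digit p σ 0 + 2 * digit p δ 0 := by
  have hmod : r ≡ p ^ N - 1 + σ + 2 * δ [MOD p] :=
    h.2.2.of_dvd (Dvd.intro_left (2 * p ^ N) (by ring))
  have := (ZMod.natCast_eq_natCast_iff _ _ _).mpr hmod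
  push_cast [Nat.cast_sub (Nat.one_le_pow N p hp), ZMod.natCast_self, zero_pow hN] at this
  simp only [natCast_digit_zero]
  linear_combination this

theorem zero_notMem (h : AdmissibleQuadrupleFor p r t N σ δ I) (hodd : Odd p)
    (hpar : digit p r 0 % 2 ≠ digit p t 0 % 2) (hsum : digit p r 0 + digit p t 0 ≤ p - 4)
    (hN : N ≠ 0) : 0 ∉ I := by
  intro h0
  have hp : 0 < p := hodd.pos
  have hp2 : p % 2 = 1 := Nat.odd_iff.mp hodd
  have hσδ := h.digit_zero_add_digit_zero_le hN
  have hσ := digit_lt hp σ 0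
  have ht := h.natCast_digit_t hp hN
  have hr := h.natCast_digit_r hp hN
  rw [if_pos h0] at ht
  have hσt : (digit p t 0 + digit p σ 0 + 1 : ℤ) = p := by
    have hdvd : (p : ℤ) ∣ digit p t 0 + digit p σ 0 + 1 - p := by
      rw [← ZMod.intCast_zmod_eq_zero_iff_dvd]
      push_cast [ZMod.natCast_self]
      linear_combination ht
    have := Int.eq_zero_of_abs_lt_dvd hdvd (abs_lt.mpr ⟨by omega, by omega⟩)
    omega
  have hdvd : (p : ℤ) ∣ digit p r 0 + digit p t 0 + 2 - 2 * digit p δ 0 - p := by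
    rw [← ZMod.intCast_zmod_eq_zero_iff_dvd]
    push_cast [ZMod.natCast_self]
    linear_combination hr + ht
  have := Int.eq_zero_of_dvd_of_even_of_abs_lt_two_mul ((Int.odd_coe_nat p).mpr hodd) hdvd
    (Int.even_iff.mpr (by omega)) (abs_lt.mpr ⟨by omega, by omega⟩)
  omega

theorem digit_zero_of_zero_notMem (h : AdmissibleQuadrupleFor p r t N σ δ I) (hodd : Odd p)
    (hpar : digit p r 0 % 2 ≠ digit p t 0 % 2) (hsum : digit p r 0 + digit p t 0 ≤ p - 4)
    (hN : N ≠ 0) (h0 : 0 ∉ I) :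
    digit p σ 0 = digit p t 0 + 1 ∧ 2 * digit p δ 0 + digit p t 0 = digit p r 0 + p := by
  have hp : 0 < p := hodd.pos
  have hp2 : p % 2 = 1 := Nat.odd_iff.mp hodd
  have hσδ := h.digit_zero_add_digit_zero_le hN
  have hσ := digit_lt hp σ 0
  have ht := h.natCast_digit_t hp hN
  have hr := h.natCast_digit_r hp hN
  rw [if_neg h0, mul_zero, add_zero] at ht
  have hσt : (digit p σ 0 : ℤ) = digit p t 0 + 1 := by
    have hdvd : (p : ℤ) ∣ digit p t 0 + 1 - digit p σ 0 := by
      rw [← ZMod.intCast_zmod_eq_zero_iff_dvd]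
      push_cast
      linear_combination ht
    have := Int.eq_zero_of_abs_lt_dvd hdvd (abs_lt.mpr ⟨by omega, by omega⟩)
    omega
  have hdvd : (p : ℤ) ∣ digit p t 0 + 2 * digit p δ 0 - digit p r 0 - p := by
    rw [← ZMod.intCast_zmod_eq_zero_iff_dvd]
    push_cast [ZMod.natCast_self]
    linear_combination ht - hr
  have := Int.eq_zero_of_dvd_of_even_of_abs_lt_two_mul ((Int.odd_coe_nat p).mpr hodd) hdvd
    (Int.even_iff.mpr (by omega)) (abs_lt.mpr ⟨by omega, by omega⟩)
  omega

end AdmissibleQuadrupleFor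

theorem stmt_15_general (p : ℕ) (hodd : Odd p) (r t : ℕ)
    (hpar : digit p r 0 % 2 ≠ digit p t 0 % 2)
    (hsum : digit p r 0 + digit p t 0 ≤ p - 4)
    (N σ δ : ℕ) (I : Finset ℕ)
    (h : AdmissibleQuadrupleFor p r t N σ δ I) (hN : 1 ≤ N) :
    0 ∉ I ∧ digit p σ 0 = digit p t 0 + 1 ∧
      2 * digit p δ 0 + digit p t 0 = digit p r 0 + p := by
  have hN0 : N ≠ 0 := Nat.one_le_iff_ne_zero.mp hN
  have h0 := h.zero_notMem hodd hpar hsum hN0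
  exact ⟨h0, h.digit_zero_of_zero_notMem hodd hpar hsum hN0 h0⟩

theorem stmt_15 (p : ℕ) (hp : p.Prime) (hodd : Odd p) (r t : ℕ) (hrt : t ≤ r)
    (hev : Even (r - t)) (hpar : digit p r 0 % 2 ≠ digit p t 0 % 2)
    (hsum : digit p r 0 + digit p t 0 ≤ p - 4)
    (N σ δ : ℕ) (I : Finset ℕ)
    (h : AdmissibleQuadrupleFor p r t N σ δ I) (hN : 1 ≤ N) :
    0 ∉ I ∧ digit p σ 0 = digit p t 0 + 1 ∧
      2 * digit p δ 0 + digit p t 0 = digit p r 0 + p :=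
  stmt_15_general p hodd r t hpar hsum N σ δ I h hN
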